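/- For a connected cubic plane graph Γ with edge set E, the total number of proper 4-face-colorings of Γ equals 4 times the sum, over all α ∈ {0,1}^{E}, of the number of proper 3-face-colorings of the state graph Γ_α. -/

import Mathlib

/-!
A combinatorial map (rotation system): darts `D`, vertex rotation `σ`,
edge involution `α` (fixed-point free).  Vertices are the cycles of `σ`,
edges the cycles of `α`, and faces the cycles of `φ = σ * α`.
Planarity of a connected map is expressed by Euler's formula `V + F = E + 2`.
-/

structure CombMap where
  D : Type
  [fin : Fintype D]
  [deq : DecidableEq D]
  σ : Equiv.Perm D
  α : Equiv.Perm D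
  α_invol : ∀ d, α (α d) = d
  α_fpf : ∀ d, α d ≠ d

attribute [instance] CombMap.fin CombMap.deq

namespace CombMap

variable (M : CombMap)

/-- The face permutation. -/
def φ : Equiv.Perm M.D := M.σ * M.α

/-- Every vertex is trivalent. -/
def Cubic : Prop := (∀ d, M.σ (M.σ (M.σ d)) = d) ∧ ∀ d, M.σ d ≠ d

/-- The map is connected. -/
def Connected : Prop :=
  ∀ d e : M.D, Relation.ReflTransGen (fun x y => M.σ x = y ∨ M.α x = y) d e

def sameCycleSetoid (f : Equiv.Perm M.D) : Setoid M.D where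
  r := f.SameCycle
  iseqv := ⟨fun x => Equiv.Perm.SameCycle.refl f x, fun h => h.symm, fun h h' => h.trans h'⟩

/-- The number of cycles (orbits) of a permutation of the darts. -/
noncomputable def numCycles (f : Equiv.Perm M.D) : ℕ := Nat.card (Quotient (M.sameCycleSetoid f))

/-- A connected map is planar iff Euler's formula `V - E + F = 2` holds. -/
def Planar : Prop :=
  M.Connected ∧ M.numCycles M.σ + M.numCycles M.φ = M.numCycles M.α + 2

/-- No edge has the same face on both of its sides (for a plane graph this
is equivalent to having no bridge). -/
def Bridgeless : Prop := ∀ d, ¬ M.φ.SameCycle d (M.α d)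

/-- A proper `n`-face-coloring, encoded as a function on darts that is
constant on faces and assigns different colors to the two sides of each edge. -/
def FaceColoring (n : ℕ) (c : M.D → Fin n) : Prop :=
  (∀ d, c (M.φ d) = c d) ∧ ∀ d, c d ≠ c (M.α d)

/-- A proper `n`-edge-coloring, encoded as a function on darts that is
constant on edges and assigns different colors to distinct edges at a vertex. -/
def EdgeColoring (n : ℕ) (c : M.D → Fin n) : Prop :=
  (∀ d, c (M.α d) = c d) ∧ ∀ d, c d ≠ c (M.σ d)

end CombMap


namespace CombMap
variable (M : CombMap)

/-!
State graphs.  For a twist assignment `t` on the edges (a half-twisted band where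
`t = true`), the faces of the resulting state-graph surface are the boundary
circles of the twisted ribbon graph.  We traverse these circles through the
boundary *segments* `M.D × Bool` (the two band-side pieces at each dart): `nextSeg`
moves along a circle across an edge band and around a vertex disk, and `sideMate`
identifies the two halves of one and the same band side.
-/

/-- One step along a boundary circle of the twisted ribbon graph. -/
def nextSeg (t : M.D → Bool) (x : M.D × Bool) : M.D × Bool :=
  if Bool.xor x.2 (!(t x.1)) then (M.σ (M.α x.1), false) else (M.σ⁻¹ (M.α x.1), true)

/-- The other half of the same band side. -/
def sideMate (t : M.D → Bool) (x : M.D × Bool) : M.D × Bool :=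
  (M.α x.1, Bool.xor x.2 (!(t x.1)))

/-- A proper `n`-face-coloring of the state graph `Γ_t`: a coloring of the boundary
circles (encoded on segments, constant along each circle) such that the two faces
adjacent along any edge of the graph receive different colors. -/
def IsStateColoring (t : M.D → Bool) (n : ℕ) (c : M.D × Bool → Fin n) : Prop :=
  (∀ x, c (M.nextSeg t x) = c x) ∧ (∀ x, c (M.sideMate t x) = c x) ∧
  ∀ d : M.D, c (d, false) ≠ c (d, true)

end CombMap

/-!
Colour faces by the Klein group `K = (ℤ/2)²`. Adding the colours on the two sides of each edge
turns a proper face colouring into a nowhere-zero `K`-flow, and at a vertex of degree 3 the flow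
condition says exactly that the three edges carry the three distinct nonzero elements of `K`; so
nowhere-zero `K`-flows are 3-edge-colourings. Two face colourings give the same flow iff they differ
by a constant, and on a plane graph every flow comes from a face colouring: in the sequence
`K^F → K^E → K^V → K` (sum across edges, sum around vertices, total sum) the first map has kernel
of size `|K|`, the rest of the sequence is exact with the last map onto, and Euler's formula
`V + F = E + 2` then forces exactness at `K^E`. Hence there are `4` times as many 4-face-colourings
as 3-edge-colourings.

Given a 3-edge-colouring `e`, label the two sides of the band at a dart `d` by `e (σ d)` and
`e (σ⁻¹ d)`. Along an edge these labels either agree or are swapped; twisting exactly the edges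
where they agree makes the labels constant along the boundary circles, i.e. a proper
3-face-colouring of the state graph. The edge colour is recovered as the third colour, so this is a
bijection between 3-edge-colourings and pairs (state, 3-face-colouring of the state graph).
-/

theorem AddMonoidHom.card_eq_card_ker_mul_card_range {H K : Type*} [AddGroup H] [AddGroup K]
    (f : H →+ K) : Nat.card H = Nat.card f.ker * Nat.card f.range := by
  rw [← AddSubgroup.index_ker, AddSubgroup.card_mul_index]

theorem AddMonoidHom.card_preimage_of_subset_range {H K : Type*} [AddGroup H] [AddGroup K]
    (f : H →+ K) {S : Set K} (hS : S ⊆ Set.range f) :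
    Nat.card (f ⁻¹' S) = Nat.card f.ker * Nat.card S := by
  choose lift hlift using hS
  rw [← Nat.card_prod]
  refine Nat.card_congr
    { toFun := fun x => (⟨x - lift x.2, by simp [hlift]⟩, ⟨f x, x.2⟩)
      invFun := fun p => ⟨p.1 + lift p.2.2, by
        rw [Set.mem_preimage, map_add, p.1.2, zero_add, hlift]; exact p.2.2⟩
      left_inv := fun x => by simp
      right_inv := fun ⟨k, s, hs⟩ => ?_ }
  have hk : f k = 0 := k.2
  have hfs : f (k + lift hs) = s := by simp [hk, hlift]
  ext <;> simp [hfs]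

theorem add_eq_zero_iff_eq_of_add_self {G : Type*} [AddCommGroup G] (hG : ∀ a : G, a + a = 0)
    {a b : G} : a + b = 0 ↔ a = b := by
  rw [add_eq_zero_iff_eq_neg, neg_eq_of_add_eq_zero_right (hG b)]

theorem add_add_add_cancel_of_add_self {G : Type*} [AddCommGroup G] (hG : ∀ a : G, a + a = 0)
    (p q r : G) : p + q + (q + r) = p + r := by
  rw [add_assoc, ← add_assoc q, hG, zero_add]

/-- Face colourings are `IsCycleColoring φ α`, edge colourings `IsCycleColoring α σ`. -/
def IsCycleColoring {X B : Type*} (f g : Equiv.Perm X) (c : X → B) : Prop :=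
  (∀ x, c (f x) = c x) ∧ ∀ x, c x ≠ c (g x)

theorem IsCycleColoring.card_congr {X B B' : Type*} {f g : Equiv.Perm X} (e : B ≃ B') :
    Nat.card {c : X → B // IsCycleColoring f g c} =
      Nat.card {c : X → B' // IsCycleColoring f g c} :=
  Nat.card_congr <| (Equiv.arrowCongr (.refl X) e).subtypeEquiv fun c => by simp [IsCycleColoring]

theorem klein_add_self : ∀ a : ZMod 2 × ZMod 2, a + a = 0 := by decide

theorem klein_add_add_eq_zero : ∀ a b c : ZMod 2 × ZMod 2,
    a ≠ 0 → b ≠ 0 → c ≠ 0 → a ≠ b → b ≠ c → c ≠ a → a + b + c = 0 := by decide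

theorem fin_three_eq_or_swap : ∀ a b c b' c' : Fin 3, a ≠ b → a ≠ c → b ≠ c →
    a ≠ b' → a ≠ c' → b' ≠ c' → (b' = b ∧ c' = c) ∨ (b' = c ∧ c' = b) := by decide

theorem fin_three_eq_of_ne : ∀ a b x y : Fin 3, a ≠ b → x ≠ a → x ≠ b → y ≠ a → y ≠ b → x = y := by
  decide

namespace CombMap

variable {M : CombMap}

theorem α_eq_iff {b d : M.D} : M.α d = b ↔ d = M.α b :=
  ⟨fun h => h ▸ (M.α_invol d).symm, fun h => h ▸ M.α_invol b⟩

theorem φ_α (d : M.D) : M.φ (M.α d) = M.σ d := by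
  simp [φ, M.α_invol]

theorem eq_of_connected {X : Type*} (hconn : M.Connected) {k : M.D → X}
    (hσ : ∀ d, k (M.σ d) = k d) (hα : ∀ d, k (M.α d) = k d) (x y : M.D) : k x = k y := by
  induction hconn x y with
  | refl => rfl
  | tail _ step ih => rcases step with rfl | rfl <;> simp [hσ, hα, ih]

theorem Planar.nonempty (hplanar : M.Planar) : Nonempty M.D := by
  by_contra h
  rw [not_nonempty_iff] at h
  simpa [numCycles] using hplanar.2

namespace Cubic

variable (hcub : M.Cubic)
include hcub

theorem σ_σ_σ (d : M.D) : M.σ (M.σ (M.σ d)) = d := hcub.1 d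

theorem σ_ne (d : M.D) : M.σ d ≠ d := hcub.2 d

theorem σ_σ_ne (d : M.D) : M.σ (M.σ d) ≠ d := fun h => hcub.σ_ne d (by
  simpa [hcub.σ_σ_σ] using congrArg M.σ h.symm)

theorem σ_σ_ne_σ (d : M.D) : M.σ (M.σ d) ≠ M.σ d := fun h => hcub.σ_ne d (M.σ.injective h)

theorem σ_inv_apply (d : M.D) : M.σ⁻¹ d = M.σ (M.σ d) := by
  rw [Equiv.Perm.inv_eq_iff_eq, hcub.σ_σ_σ]

theorem sameCycle_σ_iff {x d : M.D} :
    M.σ.SameCycle x d ↔ d = x ∨ d = M.σ x ∨ d = M.σ (M.σ x) := by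
  refine ⟨fun h => ?_, ?_⟩
  · obtain ⟨n, rfl⟩ := h.exists_nat_pow_eq
    clear h
    induction n with
    | zero => simp
    | succ n ih => rcases ih with h | h | h <;> simp [pow_succ', h, hcub.σ_σ_σ]
  · rintro (rfl | rfl | rfl)
    · exact .refl _ _
    · exact Equiv.Perm.sameCycle_apply_right.2 (.refl _ _)
    · exact Equiv.Perm.sameCycle_apply_right.2 (Equiv.Perm.sameCycle_apply_right.2 (.refl _ _))

theorem card_filter_sameCycle_σ (x : M.D) :
    (Finset.univ.filter (M.σ.SameCycle x)).card = 3 := by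
  have : Finset.univ.filter (M.σ.SameCycle x) = {x, M.σ x, M.σ (M.σ x)} := by
    ext d
    simp [hcub.sameCycle_σ_iff]
  rw [this]
  exact Finset.card_eq_three.2 ⟨_, _, _, (hcub.σ_ne x).symm, (hcub.σ_σ_ne x).symm,
    (hcub.σ_σ_ne_σ x).symm, rfl⟩

theorem apply_σ_σ_ne {B : Type*} {e : M.D → B} (he : IsCycleColoring M.α M.σ e) (d : M.D) :
    e (M.σ (M.σ d)) ≠ e d := by
  simpa [hcub.σ_σ_σ] using he.2 (M.σ (M.σ d))

end Cubic

section Chains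

variable (M) (G : Type*) [AddCommGroup G]

/-- Functions on the cycles of `f`; for `f = φ, α, σ` these are the functions on faces, edges and
vertices. -/
def invariants (f : Equiv.Perm M.D) : AddSubgroup (M.D → G) where
  carrier := {c | ∀ d, c (f d) = c d}
  add_mem' ha hb d := by simp [ha d, hb d]
  zero_mem' _ := rfl
  neg_mem' ha d := by simp [ha d]

def coboundary : M.invariants G M.φ →+ M.invariants G M.α where
  toFun c := ⟨fun d => c.1 d + c.1 (M.α d), fun d => by simp only [M.α_invol, add_comm]⟩
  map_zero' := by ext; simp
  map_add' a b := by ext; simp only [AddSubgroup.coe_add, Pi.add_apply]; abel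

def boundary (hcub : M.Cubic) : M.invariants G M.α →+ M.invariants G M.σ where
  toFun f := ⟨fun d => f.1 d + f.1 (M.σ d) + f.1 (M.σ (M.σ d)), fun d => by
    simp only [hcub.σ_σ_σ]; abel⟩
  map_zero' := by ext; simp
  map_add' a b := by ext; simp only [AddSubgroup.coe_add, Pi.add_apply]; abel

def totalSum : M.invariants G M.σ →+ G where
  toFun g := ∑ d, g.1 d
  map_zero' := by simp
  map_add' a b := by simp [Finset.sum_add_distrib]

def vertexIndicator (x : M.D) : G →+ M.invariants G M.σ where
  toFun a := ⟨fun d => if M.σ.SameCycle x d then a else 0, fun d => by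
    simp only [Equiv.Perm.sameCycle_apply_right]⟩
  map_zero' := by ext; simp
  map_add' a b := by ext; simp only [AddSubgroup.coe_add, Pi.add_apply]; split_ifs <;> simp

variable {M G}

@[simp]
theorem coboundary_apply (c : M.invariants G M.φ) (d : M.D) :
    (M.coboundary G c).1 d = c.1 d + c.1 (M.α d) := rfl

@[simp]
theorem boundary_apply (hcub : M.Cubic) (f : M.invariants G M.α) (d : M.D) :
    (M.boundary G hcub f).1 d = f.1 d + f.1 (M.σ d) + f.1 (M.σ (M.σ d)) := rfl

theorem vertexIndicator_apply (x : M.D) (a : G) (d : M.D) :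
    (M.vertexIndicator G x a).1 d = if M.σ.SameCycle x d then a else 0 := rfl

theorem eq_of_mem_invariants_of_sameCycle {f : Equiv.Perm M.D} {c : M.D → G}
    (hc : c ∈ M.invariants G f) {x y : M.D} (h : f.SameCycle x y) : c x = c y := by
  obtain ⟨n, rfl⟩ := h.exists_nat_pow_eq
  clear h
  induction n with
  | zero => rfl
  | succ n ih => rw [pow_succ', Equiv.Perm.mul_apply, hc, ih]

variable (G) in
theorem card_invariants (f : Equiv.Perm M.D) :
    Nat.card (M.invariants G f) = Nat.card G ^ M.numCycles f := by
  rw [numCycles, ← Nat.card_fun]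
  exact Nat.card_congr
    { toFun := fun c => Quotient.lift c.1 fun _ _ => eq_of_mem_invariants_of_sameCycle c.2
      invFun := fun q => ⟨fun d => q ⟦d⟧, fun d =>
        congrArg q (Quotient.sound (Equiv.Perm.sameCycle_apply_left.2 (.refl _ _)))⟩
      left_inv := fun _ => rfl
      right_inv := fun q => funext fun x => Quotient.inductionOn x fun _ => rfl }

theorem card_ker_coboundary (hG : ∀ a : G, a + a = 0) (hconn : M.Connected) [Nonempty M.D] :
    Nat.card (M.coboundary G).ker = Nat.card G := by
  obtain ⟨d₀⟩ := ‹Nonempty M.D›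
  have hker {c : M.invariants G M.φ} :
      c ∈ (M.coboundary G).ker ↔ ∀ d, c.1 d + c.1 (M.α d) = 0 := by
    rw [AddMonoidHom.mem_ker, Subtype.ext_iff, funext_iff]
    simp only [coboundary_apply, ZeroMemClass.coe_zero, Pi.zero_apply]
  refine Nat.card_congr
    { toFun := fun c => c.1.1 d₀
      invFun := fun a => ⟨⟨fun _ => a, fun _ => rfl⟩, hker.2 fun _ => hG a⟩
      left_inv := fun ⟨c, hc⟩ => ?_
      right_inv := fun _ => rfl }
  have hα (d : M.D) : c.1 (M.α d) = c.1 d :=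
    ((add_eq_zero_iff_eq_of_add_self hG).1 (hker.1 hc d)).symm
  have hσ (d : M.D) : c.1 (M.σ d) = c.1 d := by rw [← φ_α, c.2, hα]
  ext d
  exact eq_of_connected hconn hσ hα d₀ d

theorem coboundary_range_le_ker_boundary (hG : ∀ a : G, a + a = 0) (hcub : M.Cubic) :
    (M.coboundary G).range ≤ (M.boundary G hcub).ker := by
  rintro _ ⟨c, rfl⟩
  have hcα (x : M.D) : c.1 (M.α x) = c.1 (M.σ x) := by rw [← φ_α, c.2]
  rw [AddMonoidHom.mem_ker]
  ext d
  simp only [boundary_apply, coboundary_apply, hcα, hcub.σ_σ_σ, ZeroMemClass.coe_zero,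
    Pi.zero_apply]
  rw [add_add_add_cancel_of_add_self hG, add_add_add_cancel_of_add_self hG, hG]

theorem sum_eq_zero_of_mem_invariants_α (hG : ∀ a : G, a + a = 0) {f : M.D → G}
    (hf : f ∈ M.invariants G M.α) : ∑ d, f d = 0 :=
  Finset.sum_involution (fun d _ => M.α d) (fun d _ => by rw [hf, hG])
    (fun d _ _ => M.α_fpf d) (fun _ _ => Finset.mem_univ _) (fun d _ => M.α_invol d)

theorem sum_ite_sameCycle_σ (hG : ∀ a : G, a + a = 0) (hcub : M.Cubic) (x : M.D) (a : G) :
    ∑ d, (if M.σ.SameCycle x d then a else 0) = a := by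
  rw [← Finset.sum_filter, Finset.sum_const, hcub.card_filter_sameCycle_σ, succ_nsmul, two_nsmul,
    hG, zero_add]

theorem sum_vertexIndicator (hG : ∀ a : G, a + a = 0) (hcub : M.Cubic)
    (g : M.invariants G M.σ) : ∑ d, M.vertexIndicator G d (g.1 d) = g := by
  ext x
  rw [AddSubgroup.val_finsetSum, Finset.sum_apply, ← sum_ite_sameCycle_σ hG hcub x (g.1 x)]
  refine Finset.sum_congr rfl fun d _ => ?_
  rw [vertexIndicator_apply]
  by_cases h : M.σ.SameCycle x d
  · rw [if_pos h.symm, if_pos h, eq_of_mem_invariants_of_sameCycle g.2 h.symm]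
  · rw [if_neg (mt .symm h), if_neg h]

theorem vertexIndicator_σ (x : M.D) (a : G) :
    M.vertexIndicator G (M.σ x) a = M.vertexIndicator G x a := by
  ext d
  simp only [vertexIndicator_apply, Equiv.Perm.sameCycle_apply_left]

theorem single_add_single_σ_add_single_σ_σ (hcub : M.Cubic) (b d : M.D) (a : G) :
    (Pi.single b a : M.D → G) d + (Pi.single b a : M.D → G) (M.σ d) +
      (Pi.single b a : M.D → G) (M.σ (M.σ d)) = if M.σ.SameCycle b d then a else 0 := by
  have h₁ := hcub.σ_ne d
  have h₂ := hcub.σ_σ_ne d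
  have h₃ := hcub.σ_σ_ne_σ d
  by_cases hbd : M.σ.SameCycle b d
  · rw [if_pos hbd]
    rcases hcub.sameCycle_σ_iff.1 hbd.symm with rfl | rfl | rfl <;>
      simp [h₁, h₂, h₃, h₁.symm, h₂.symm, h₃.symm]
  · have hb : ¬(b = d ∨ b = M.σ d ∨ b = M.σ (M.σ d)) := fun h =>
      hbd (hcub.sameCycle_σ_iff.2 h).symm
    rw [not_or, not_or] at hb
    simp [hbd, Ne.symm hb.1, Ne.symm hb.2.1, Ne.symm hb.2.2]

theorem vertexIndicator_add_vertexIndicator_α_mem_range (hcub : M.Cubic) (b : M.D) (a : G) :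
    M.vertexIndicator G b a + M.vertexIndicator G (M.α b) a ∈ (M.boundary G hcub).range := by
  refine ⟨⟨Pi.single b a + Pi.single (M.α b) a, fun d => ?_⟩, ?_⟩
  · simp only [Pi.add_apply, Pi.single_apply, α_eq_iff, EmbeddingLike.apply_eq_iff_eq, add_comm]
  · ext d
    simp only [boundary_apply, AddSubgroup.coe_add, Pi.add_apply, vertexIndicator_apply,
      ← single_add_single_σ_add_single_σ_σ hcub]
    abel

theorem vertexIndicator_add_mem_range (hG : ∀ a : G, a + a = 0) (hcub : M.Cubic)
    (hconn : M.Connected) (x y : M.D) (a : G) :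
    M.vertexIndicator G x a + M.vertexIndicator G y a ∈ (M.boundary G hcub).range := by
  induction hconn x y with
  | refl => simp [← map_add, hG]
  | @tail b _ _ step ih =>
    rcases step with rfl | rfl
    · rwa [vertexIndicator_σ]
    · have hG' (v : M.invariants G M.σ) : v + v = 0 := by ext; exact hG _
      simpa only [add_add_add_cancel_of_add_self hG'] using
        add_mem ih (vertexIndicator_add_vertexIndicator_α_mem_range hcub b a)

theorem range_boundary (hG : ∀ a : G, a + a = 0) (hcub : M.Cubic) (hconn : M.Connected)
    [Nonempty M.D] : (M.boundary G hcub).range = (M.totalSum G).ker := by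
  obtain ⟨d₀⟩ := ‹Nonempty M.D›
  apply le_antisymm
  · rintro _ ⟨f, rfl⟩
    have hf := sum_eq_zero_of_mem_invariants_α hG f.2
    have hf₁ : ∑ d, f.1 (M.σ d) = 0 := (Equiv.sum_comp M.σ f.1).trans hf
    have hf₂ : ∑ d, f.1 (M.σ (M.σ d)) = 0 :=
      (Equiv.sum_comp M.σ (fun d => f.1 (M.σ d))).trans hf₁
    rw [AddMonoidHom.mem_ker]
    change ∑ d, (f.1 d + f.1 (M.σ d) + f.1 (M.σ (M.σ d))) = 0
    rw [Finset.sum_add_distrib, Finset.sum_add_distrib, hf, hf₁, hf₂, add_zero, add_zero]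
  · intro g hg
    replace hg : ∑ d, g.1 d = 0 := hg
    have hsplit : g = ∑ d, (M.vertexIndicator G d (g.1 d) + M.vertexIndicator G d₀ (g.1 d)) := by
      rw [Finset.sum_add_distrib, ← map_sum, hg, map_zero, add_zero, sum_vertexIndicator hG hcub]
    rw [hsplit]
    exact AddSubgroup.sum_mem _ fun d _ => vertexIndicator_add_mem_range hG hcub hconn _ _ _

theorem totalSum_surjective (hG : ∀ a : G, a + a = 0) (hcub : M.Cubic) [Nonempty M.D] :
    Function.Surjective (M.totalSum G) := fun a =>
  ⟨M.vertexIndicator G (Classical.arbitrary M.D) a, sum_ite_sameCycle_σ hG hcub _ a⟩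

theorem range_coboundary [Finite G] (hG : ∀ a : G, a + a = 0) (hcub : M.Cubic)
    (hplanar : M.Planar) : (M.coboundary G).range = (M.boundary G hcub).ker := by
  have := hplanar.nonempty
  refine AddSubgroup.eq_of_le_of_card_ge (coboundary_range_le_ker_boundary hG hcub) (le_of_eq ?_)
  have hφ := (M.coboundary G).card_eq_card_ker_mul_card_range
  have hα := (M.boundary G hcub).card_eq_card_ker_mul_card_range
  have hσ := (M.totalSum G).card_eq_card_ker_mul_card_range
  rw [card_invariants, card_ker_coboundary hG hplanar.1] at hφ
  rw [card_invariants, range_boundary hG hcub hplanar.1] at hα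
  rw [card_invariants, AddMonoidHom.range_eq_top.2 (totalSum_surjective hG hcub),
    AddSubgroup.card_top] at hσ
  have heuler : Nat.card G ^ (M.numCycles M.σ + M.numCycles M.φ) =
      Nat.card G ^ (M.numCycles M.α + 2) := by rw [hplanar.2]
  rw [pow_add, pow_add, hφ, hα, hσ] at heuler
  have hpos : 0 < Nat.card (M.totalSum G).ker * Nat.card G ^ 2 :=
    Nat.mul_pos Nat.card_pos (pow_pos Nat.card_pos 2)
  refine Nat.eq_of_mul_eq_mul_left hpos ?_
  calc _ = Nat.card (M.boundary G hcub).ker * Nat.card (M.totalSum G).ker * Nat.card G ^ 2 := by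
        ring
    _ = _ := heuler.symm
    _ = _ := by ring

theorem card_isCycleColoring_φ_α [Finite G] (hG : ∀ a : G, a + a = 0) (hcub : M.Cubic)
    (hplanar : M.Planar) :
    Nat.card {c : M.D → G // IsCycleColoring M.φ M.α c} = Nat.card G *
      Nat.card {f : M.invariants G M.α // f ∈ (M.boundary G hcub).ker ∧ ∀ d, f.1 d ≠ 0} := by
  have := hplanar.nonempty
  have hS : {f : M.invariants G M.α | f ∈ (M.boundary G hcub).ker ∧ ∀ d, f.1 d ≠ 0} ⊆
      Set.range (M.coboundary G) := fun f hf => by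
    rw [← AddMonoidHom.coe_range, range_coboundary hG hcub hplanar]; exact hf.1
  rw [← card_ker_coboundary hG hplanar.1]
  refine .trans ?_ ((M.coboundary G).card_preimage_of_subset_range hS)
  exact Nat.card_congr
    { toFun := fun c => ⟨⟨c.1, c.2.1⟩, coboundary_range_le_ker_boundary hG hcub ⟨_, rfl⟩,
        fun d => (add_eq_zero_iff_eq_of_add_self hG).not.2 (c.2.2 d)⟩
      invFun := fun c => ⟨c.1.1, c.1.2,
        fun d => (add_eq_zero_iff_eq_of_add_self hG).not.1 (c.2.2 d)⟩
      left_inv := fun _ => rfl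
      right_inv := fun _ => rfl }

end Chains

theorem card_nowhereZero_klein_flows (hcub : M.Cubic) :
    Nat.card {f : M.invariants (ZMod 2 × ZMod 2) M.α //
        f ∈ (M.boundary _ hcub).ker ∧ ∀ d, f.1 d ≠ 0} =
      Nat.card {e : M.D → {a : ZMod 2 × ZMod 2 // a ≠ 0} // IsCycleColoring M.α M.σ e} := by
  refine Nat.card_congr
    { toFun := fun f => ⟨fun d => ⟨f.1.1 d, f.2.2 d⟩, fun d => Subtype.ext (f.1.2 d),
        fun d h => f.2.2 (M.σ (M.σ d)) ?_⟩
      invFun := fun e => ⟨⟨fun d => e.1 d, fun d => congrArg Subtype.val (e.2.1 d)⟩, ?_,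
        fun d => (e.1 d).2⟩
      left_inv := fun _ => rfl
      right_inv := fun _ => rfl }
  · have hflow : f.1.1 d + f.1.1 (M.σ d) + f.1.1 (M.σ (M.σ d)) = 0 :=
      congrFun (congrArg Subtype.val f.2.1) d
    rwa [show f.1.1 d = f.1.1 (M.σ d) from congrArg Subtype.val h, klein_add_self, zero_add]
      at hflow
  · ext d : 2
    exact klein_add_add_eq_zero _ _ _ (e.1 d).2 (e.1 _).2 (e.1 _).2
      (Subtype.coe_ne_coe.2 (e.2.2 d)) (Subtype.coe_ne_coe.2 (e.2.2 (M.σ d)))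
      (Subtype.coe_ne_coe.2 (hcub.apply_σ_σ_ne e.2 d))

section States

variable (M)

/-- The step of a boundary circle around a vertex corner, from one band side to the next. -/
def vertexTurn (x : M.D × Bool) : M.D × Bool :=
  if x.2 then (M.σ x.1, false) else (M.σ⁻¹ x.1, true)

def stateOf (e : M.D → Fin 3) (d : M.D) : Bool := decide (e (M.σ (M.α d)) = e (M.σ d))

def stateColoringOf (e : M.D → Fin 3) (x : M.D × Bool) : Fin 3 :=
  if x.2 then e (M.σ⁻¹ x.1) else e (M.σ x.1)

def edgeColoringOf (c : M.D × Bool → Fin 3) (d : M.D) : Fin 3 := c (M.σ⁻¹ d, false)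

variable {M}

theorem nextSeg_eq_vertexTurn_sideMate (t : M.D → Bool) (x : M.D × Bool) :
    M.nextSeg t x = M.vertexTurn (M.sideMate t x) := rfl

theorem sideMate_sideMate {t : M.D → Bool} (ht : ∀ d, t (M.α d) = t d) (x : M.D × Bool) :
    M.sideMate t (M.sideMate t x) = x := by
  simp [sideMate, M.α_invol, ht]

theorem stateOf_α (e : M.D → Fin 3) (d : M.D) : M.stateOf e (M.α d) = M.stateOf e d := by
  simp only [stateOf, M.α_invol, eq_comm]

section EdgeColoring

variable {e : M.D → Fin 3}

theorem EdgeColoring.apply_σ_ne_apply_σ_inv (he : M.EdgeColoring 3 e) (hcub : M.Cubic) (x : M.D) :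
    e (M.σ x) ≠ e (M.σ⁻¹ x) := by
  rw [hcub.σ_inv_apply]; exact he.2 (M.σ x)

theorem EdgeColoring.apply_ne_apply_σ_inv (he : M.EdgeColoring 3 e) (hcub : M.Cubic) (x : M.D) :
    e x ≠ e (M.σ⁻¹ x) := by
  rw [hcub.σ_inv_apply]; exact (hcub.apply_σ_σ_ne he x).symm

theorem EdgeColoring.across_edge (he : M.EdgeColoring 3 e) (hcub : M.Cubic) (d : M.D) :
    (e (M.σ (M.α d)) = e (M.σ d) ∧ e (M.σ⁻¹ (M.α d)) = e (M.σ⁻¹ d)) ∨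
      (e (M.σ (M.α d)) = e (M.σ⁻¹ d) ∧ e (M.σ⁻¹ (M.α d)) = e (M.σ d)) := by
  have hα : e (M.α d) = e d := he.1 d
  refine fin_three_eq_or_swap (e d) _ _ _ _ (he.2 d) (he.apply_ne_apply_σ_inv hcub d)
    (he.apply_σ_ne_apply_σ_inv hcub d) ?_ ?_ (he.apply_σ_ne_apply_σ_inv hcub (M.α d))
  · rw [← hα]; exact he.2 (M.α d)
  · rw [← hα]; exact he.apply_ne_apply_σ_inv hcub (M.α d)

theorem stateColoringOf_vertexTurn (hcub : M.Cubic) (x : M.D × Bool) :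
    M.stateColoringOf e (M.vertexTurn x) = M.stateColoringOf e x := by
  rcases x with ⟨d, _ | _⟩ <;> simp [stateColoringOf, vertexTurn, hcub.σ_inv_apply, hcub.σ_σ_σ]

theorem EdgeColoring.stateColoringOf_sideMate (he : M.EdgeColoring 3 e) (hcub : M.Cubic)
    (x : M.D × Bool) :
    M.stateColoringOf e (M.sideMate (M.stateOf e) x) = M.stateColoringOf e x := by
  rcases x with ⟨d, b⟩
  rcases he.across_edge hcub d with ⟨h₁, h₂⟩ | ⟨h₁, h₂⟩
  · have hst : M.stateOf e d = true := decide_eq_true h₁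
    cases b <;> simp only [stateColoringOf, sideMate, hst, h₁, h₂, Bool.not_true, Bool.xor_false]
  · have hst : M.stateOf e d = false :=
      decide_eq_false (h₁ ▸ (he.apply_σ_ne_apply_σ_inv hcub d).symm)
    cases b <;> simp only [stateColoringOf, sideMate, hst, h₁, h₂, Bool.not_false, Bool.xor_true,
      Bool.not_true, Bool.false_eq_true, ↓reduceIte]

theorem EdgeColoring.isStateColoring_stateColoringOf (he : M.EdgeColoring 3 e) (hcub : M.Cubic) :
    M.IsStateColoring (M.stateOf e) 3 (M.stateColoringOf e) := by
  refine ⟨fun x => ?_, he.stateColoringOf_sideMate hcub, fun d => ?_⟩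
  · rw [nextSeg_eq_vertexTurn_sideMate, stateColoringOf_vertexTurn hcub,
      he.stateColoringOf_sideMate hcub]
  · simpa [stateColoringOf] using he.apply_σ_ne_apply_σ_inv hcub d

theorem edgeColoringOf_stateColoringOf : M.edgeColoringOf (M.stateColoringOf e) = e := by
  funext d
  simp only [edgeColoringOf, stateColoringOf, Bool.false_eq_true, ↓reduceIte, Equiv.Perm.coe_inv,
    Equiv.apply_symm_apply]

end EdgeColoring

section StateColoring

variable {t : M.D → Bool} {c : M.D × Bool → Fin 3}

theorem IsStateColoring.apply_vertexTurn (hc : M.IsStateColoring t 3 c)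
    (ht : ∀ d, t (M.α d) = t d) (x : M.D × Bool) : c (M.vertexTurn x) = c x := by
  have := hc.1 (M.sideMate t x)
  rwa [nextSeg_eq_vertexTurn_sideMate, sideMate_sideMate ht, hc.2.1] at this

theorem IsStateColoring.apply_σ_false (hc : M.IsStateColoring t 3 c)
    (ht : ∀ d, t (M.α d) = t d) (d : M.D) : c (M.σ d, false) = c (d, true) :=
  hc.apply_vertexTurn ht (d, true)

theorem IsStateColoring.across_edge (hc : M.IsStateColoring t 3 c) (d : M.D) :
    (c (M.α d, false) = c (d, false) ∧ c (M.α d, true) = c (d, true)) ∨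
      (c (M.α d, false) = c (d, true) ∧ c (M.α d, true) = c (d, false)) := by
  have h₁ := hc.2.1 (d, false)
  have h₂ := hc.2.1 (d, true)
  cases htd : t d
  · right; simp_all [sideMate]
  · left; simp_all [sideMate]

theorem IsStateColoring.edgeColoringOf_ne (hc : M.IsStateColoring t 3 c)
    (ht : ∀ d, t (M.α d) = t d) (hcub : M.Cubic) (d : M.D) :
    M.edgeColoringOf c d ≠ c (d, false) ∧ M.edgeColoringOf c d ≠ c (d, true) := by
  constructor
  · have := hc.apply_σ_false ht (M.σ.symm d)
    rw [M.σ.apply_symm_apply] at this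
    rw [edgeColoringOf, this]
    exact hc.2.2 _
  · rw [edgeColoringOf, hcub.σ_inv_apply, hc.apply_σ_false ht, ← hc.apply_σ_false ht d]
    exact (hc.2.2 _).symm

theorem IsStateColoring.edgeColoring_edgeColoringOf (hc : M.IsStateColoring t 3 c)
    (ht : ∀ d, t (M.α d) = t d) (hcub : M.Cubic) : M.EdgeColoring 3 (M.edgeColoringOf c) := by
  have hne := hc.edgeColoringOf_ne ht hcub
  refine ⟨fun d => ?_, fun d => ?_⟩
  · obtain ⟨h₁, h₂⟩ := hne (M.α d)
    rcases hc.across_edge d with ⟨h, h'⟩ | ⟨h, h'⟩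
    · exact fin_three_eq_of_ne _ _ _ _ (hc.2.2 d) (h ▸ h₁) (h' ▸ h₂) (hne d).1 (hne d).2
    · exact fin_three_eq_of_ne _ _ _ _ (hc.2.2 d) (h' ▸ h₂) (h ▸ h₁) (hne d).1 (hne d).2
  · have : M.edgeColoringOf c (M.σ d) = c (d, false) := by
      simp only [edgeColoringOf, Equiv.Perm.coe_inv, Equiv.symm_apply_apply]
    rw [this]
    exact (hne d).1

theorem IsStateColoring.stateOf_edgeColoringOf (hc : M.IsStateColoring t 3 c) :
    M.stateOf (M.edgeColoringOf c) = t := by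
  funext d
  simp only [stateOf, edgeColoringOf, Equiv.Perm.coe_inv, Equiv.symm_apply_apply]
  have h₁ := hc.2.1 (d, false)
  have h₂ := hc.2.1 (d, true)
  cases htd : t d
  · simp only [sideMate, htd, Bool.not_false, Bool.xor_true, Bool.not_true] at h₂
    exact decide_eq_false (h₂ ▸ hc.2.2 d).symm
  · simp only [sideMate, htd, Bool.not_true, Bool.xor_false] at h₁
    exact decide_eq_true h₁

theorem IsStateColoring.stateColoringOf_edgeColoringOf (hc : M.IsStateColoring t 3 c)
    (ht : ∀ d, t (M.α d) = t d) (hcub : M.Cubic) :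
    M.stateColoringOf (M.edgeColoringOf c) = c := by
  funext ⟨d, b⟩
  cases b
  · simp only [stateColoringOf, edgeColoringOf, Bool.false_eq_true, ↓reduceIte,
      Equiv.Perm.coe_inv, Equiv.symm_apply_apply]
  · simp only [stateColoringOf, edgeColoringOf, ↓reduceIte]
    rw [hcub.σ_inv_apply (M.σ⁻¹ d), Equiv.Perm.coe_inv, Equiv.apply_symm_apply,
      hc.apply_σ_false ht]

end StateColoring

def edgeColoringEquivStateColoring (hcub : M.Cubic) :
    {e : M.D → Fin 3 // M.EdgeColoring 3 e} ≃
      Σ t : {t : M.D → Bool // ∀ d, t (M.α d) = t d},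
        {c : M.D × Bool → Fin 3 // M.IsStateColoring t.1 3 c} where
  toFun e := ⟨⟨M.stateOf e.1, stateOf_α e.1⟩, M.stateColoringOf e.1,
    e.2.isStateColoring_stateColoringOf hcub⟩
  invFun p := ⟨M.edgeColoringOf p.2.1, p.2.2.edgeColoring_edgeColoringOf p.1.2 hcub⟩
  left_inv _ := Subtype.ext edgeColoringOf_stateColoringOf
  right_inv p := Sigma.subtype_ext (Subtype.ext p.2.2.stateOf_edgeColoringOf)
    (p.2.2.stateColoringOf_edgeColoringOf p.1.2 hcub)

end States

end CombMap

/-- For a connected cubic plane graph `M`, the number of proper 4-face-colorings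
of `M` equals 4 times the sum, over all states `t` (assignments of half-twists to
the edges), of the number of proper 3-face-colorings of the state graph `Γ_t`. -/
theorem four_colorings_eq_four_mul_sum_of_state_three_colorings
    (M : CombMap) (hcub : M.Cubic) (hplanar : M.Planar) :
    Nat.card {c : M.D → Fin 4 // M.FaceColoring 4 c} =
      4 * ∑ t : {t : M.D → Bool // ∀ d, t (M.α d) = t d},
            Nat.card {c : M.D × Bool → Fin 3 // M.IsStateColoring t.1 3 c} := by
  calc Nat.card {c : M.D → Fin 4 // M.FaceColoring 4 c}
      = Nat.card {c : M.D → ZMod 2 × ZMod 2 // IsCycleColoring M.φ M.α c} :=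
        IsCycleColoring.card_congr (Fintype.equivOfCardEq rfl)
    _ = 4 * Nat.card {e : M.D → {a : ZMod 2 × ZMod 2 // a ≠ 0} // IsCycleColoring M.α M.σ e} := by
        rw [CombMap.card_isCycleColoring_φ_α klein_add_self hcub hplanar,
          CombMap.card_nowhereZero_klein_flows, Nat.card_prod, Nat.card_zmod]
    _ = 4 * Nat.card {e : M.D → Fin 3 // M.EdgeColoring 3 e} := by
        rw [IsCycleColoring.card_congr (Fintype.equivFinOfCardEq rfl)]
        rfl
    _ = _ := by
        rw [Nat.card_congr (CombMap.edgeColoringEquivStateColoring hcub), Nat.card_sigma]
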